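/- arXiv:2604.23782 — 5 statements merged into one kernel-verified Lean document; each statement's English description precedes it below -/
import Mathlib

section
/- Let M be a Hilbert C*-module over a C*-algebra A admitting a countable standard frame {x_i}_{i∈ℕ} with lower frame bound c₁ > 0. Then every standard frame {y_α}_{α∈𝔄} of M has at most countably many nonzero elements. -/
open scoped RightActions

/-- The right Hilbert C⋆-module class as it stood in the older Mathlib (right `Aᵐᵒᵖ`-action,
inner product right `A`-linear in the second argument). -/
class CStarModuleRight (A E : Type*) [NonUnitalSemiring A] [StarRing A] [Module ℂ A]
    [AddCommGroup E] [Module ℂ E] [PartialOrder A] [SMul Aᵐᵒᵖ E] [Norm A] [Norm E]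
    extends Inner A E where
  inner_add_right {x} {y} {z} : inner x (y + z) = inner x y + inner x z
  inner_self_nonneg {x} : 0 ≤ inner x x
  inner_self {x} : inner x x = 0 ↔ x = 0
  inner_op_smul_right {a : A} {x y : E} : inner x (y <• a) = inner x y * a
  inner_smul_right_complex {z : ℂ} {x} {y} : inner x (z • y) = z • inner x y
  star_inner x y : star (inner x y) = inner y x
  norm_eq_sqrt_norm_inner_self x : ‖x‖ = √‖inner x x‖

/-- A family `x : J → E` is a standard frame of the Hilbert `A`-module `E` with frame
constants `c₁, c₂ > 0` if for every `v` the series `Σ_j ⟨v,x_j⟩⟨x_j,v⟩` converges in norm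
in `A` and its sum `S` satisfies `c₁⟨v,v⟩ ≤ S ≤ c₂⟨v,v⟩`. -/
def IsStandardFrame {A E : Type*} [NonUnitalCStarAlgebra A] [PartialOrder A]
    [StarOrderedRing A] [NormedAddCommGroup E] [NormedSpace ℂ E] [SMul Aᵐᵒᵖ E]
    [CStarModuleRight A E] {J : Type*} (x : J → E) (c₁ c₂ : ℝ) : Prop :=
  0 < c₁ ∧ 0 < c₂ ∧ ∀ v : E, ∃ S : A,
    HasSum (fun j => (inner A v (x j) : A) * (inner A (x j) v : A)) S ∧
    c₁ • (inner A v v : A) ≤ S ∧ S ≤ c₂ • (inner A v v : A)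

/-- A summable family in a normed group has countable support. -/
lemma countable_support_of_summable' {β E : Type*} [NormedAddCommGroup E] {f : β → E}
    (h : Summable f) : (Function.support f).Countable := by
  have h0 := h.tendsto_cofinite_zero
  have hsub : Function.support f ⊆ ⋃ n : ℕ, {a | (1:ℝ)/(n+1) ≤ ‖f a‖} := by
    intro a ha
    have : 0 < ‖f a‖ := by simpa [Function.mem_support, norm_pos_iff] using ha
    obtain ⟨n, hn⟩ := exists_nat_one_div_lt this
    exact Set.mem_iUnion.2 ⟨n, le_of_lt hn⟩
  refine Set.Countable.mono hsub (Set.countable_iUnion fun n => Set.Finite.countable ?_)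
  have hmem := h0 (Metric.ball_mem_nhds (0 : E) (by positivity : (0:ℝ) < 1/(n+1)))
  rw [Filter.mem_map, Filter.mem_cofinite] at hmem
  refine hmem.subset fun a ha => ?_
  simp only [Set.mem_compl_iff, Set.mem_preimage, Metric.mem_ball, dist_zero_right, not_lt]
  exact ha

/-- If a Hilbert `A`-module admits a countable standard frame, then every standard frame
of it has at most countably many nonzero elements. -/
theorem stmt_2 {A E : Type*} [NonUnitalCStarAlgebra A] [PartialOrder A] [StarOrderedRing A]
    [NormedAddCommGroup E] [NormedSpace ℂ E] [SMul Aᵐᵒᵖ E] [CStarModuleRight A E] [CompleteSpace E]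
    (x : ℕ → E) (c₁ c₂ : ℝ) (hx : IsStandardFrame (A := A) x c₁ c₂)
    {𝔄 : Type*} (y : 𝔄 → E) (d₁ d₂ : ℝ) (hy : IsStandardFrame (A := A) y d₁ d₂) :
    {α : 𝔄 | y α ≠ 0}.Countable := by
  obtain ⟨hc₁, -, hxf⟩ := hx
  obtain ⟨-, -, hyf⟩ := hy
  -- The nonzero elements are covered by the supports of the series at the x i.
  have hsub : {α : 𝔄 | y α ≠ 0} ⊆
      ⋃ i : ℕ, Function.support (fun α => (inner A (x i) (y α) : A) * (inner A (y α) (x i) : A)) := by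
    intro α hα
    by_contra hmem
    simp only [Set.mem_iUnion, Function.mem_support, not_exists, not_not] at hmem
    -- then ⟨x i, y α⟩ = 0 for all i
    have hzero : ∀ i, (inner A (x i) (y α) : A) = 0 := by
      intro i
      have := hmem i
      rw [← CStarModuleRight.star_inner (x i) (y α)] at this
      have h2 : (inner A (x i) (y α) : A) * star (inner A (x i) (y α) : A) = 0 := this
      have := congrArg norm h2
      rw [CStarRing.norm_self_mul_star, norm_zero] at this
      exact norm_eq_zero.mp (by nlinarith [norm_nonneg (inner A (x i) (y α) : A)])
    obtain ⟨S, hS, hlow, -⟩ := hxf (y α)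
    have hS0 : S = 0 := by
      have : (fun i => (inner A (y α) (x i) : A) * (inner A (x i) (y α) : A)) = fun _ => 0 := by
        funext i; rw [hzero i, mul_zero]
      rw [this] at hS
      exact hS.unique hasSum_zero
    rw [hS0] at hlow
    have hnn : (0 : A) ≤ inner A (y α) (y α) := CStarModuleRight.inner_self_nonneg
    have hle : c₁ • (inner A (y α) (y α) : A) ≤ 0 := hlow
    have h0 : (inner A (y α) (y α) : A) = 0 := by
      have h1 : c₁ • (inner A (y α) (y α) : A) = 0 :=
        le_antisymm hle (smul_nonneg (le_of_lt hc₁) hnn)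
      have := smul_eq_zero.mp h1
      rcases this with h | h
      · exact absurd h (ne_of_gt hc₁)
      · exact h
    exact hα (CStarModuleRight.inner_self.mp h0)
  refine Set.Countable.mono hsub (Set.countable_iUnion fun i => ?_)
  obtain ⟨S, hS, -, -⟩ := hyf (x i)
  exact countable_support_of_summable' hS.summable
end

section
/- Let A be a C*-algebra, M and N Hilbert A-modules, B the closed unit ball of M, and F : M → N a bounded A-linear operator that is Banach-compact (a norm limit of finite sums of operators z·f(·) with z ∈ N, f a bounded A-linear functional on M). Then for every ε > 0 there exist M_ε > 0 and z₁,…,z_s ∈ N such that every t ∈ F(B) admits a₁,…,a_s ∈ A with ‖a_k‖ ≤ M_ε and ‖t − Σ_k z_k a_k‖ < ε; that is, F(B) is A-precompact. -/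
open scoped RightActions

/-- The Hilbert C⋆-module class of the older Mathlib (right `A`-modules, via `SMul Aᵐᵒᵖ E`),
restored verbatim under a new name since Mathlib's `CStarModule` is now a left module. -/
class RightCStarModule (A : outParam <| Type*) (E : Type*) [NonUnitalSemiring A] [StarRing A]
    [Module ℂ A] [AddCommGroup E] [Module ℂ E] [PartialOrder A] [SMul Aᵐᵒᵖ E] [Norm A] [Norm E]
    extends Inner A E where
  inner_add_right {x} {y} {z} : inner x (y + z) = inner x y + inner x z
  inner_self_nonneg {x} : 0 ≤ inner x x
  inner_self {x} : inner x x = 0 ↔ x = 0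
  inner_op_smul_right {a : A} {x y : E} : inner x (y <• a) = inner x y * a
  inner_smul_right_complex {z : ℂ} {x} {y} : inner x (z • y) = z • inner x y
  star_inner x y : star (inner x y) = inner y x
  norm_eq_sqrt_norm_inner_self x : ‖x‖ = Real.sqrt ‖inner x x‖

section

variable {A M N : Type*} [NonUnitalCStarAlgebra A] [PartialOrder A] [StarOrderedRing A]
    [NormedAddCommGroup M] [NormedSpace ℂ M] [SMul Aᵐᵒᵖ M] [RightCStarModule A M]
    [NormedAddCommGroup N] [NormedSpace ℂ N] [SMul Aᵐᵒᵖ N] [RightCStarModule A N]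

/-- `T` is an elementary Banach-compact operator `θ_{z,f} : x ↦ z·f(x)` for some `z ∈ N`
and some bounded `A`-linear functional `f : M → A`. -/
def IsElemBanachCompact (T : M →L[ℂ] N) : Prop :=
  ∃ (z : N) (f : M →L[ℂ] A), (∀ (a : A) (x : M), f (x <• a) = f x * a) ∧
    ∀ x : M, T x = z <• f x

/-- The Banach-compact operators `M → N`: the operator-norm closure of the linear span of
the elementary operators `θ_{z,f}`. -/
def BanachCompactSet (A : outParam Type*) (M N : Type*) [NonUnitalCStarAlgebra A]
    [PartialOrder A] [StarOrderedRing A]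
    [NormedAddCommGroup M] [NormedSpace ℂ M] [SMul Aᵐᵒᵖ M] [RightCStarModule A M]
    [NormedAddCommGroup N] [NormedSpace ℂ N] [SMul Aᵐᵒᵖ N] [RightCStarModule A N] :
    Set (M →L[ℂ] N) :=
  closure (Submodule.span ℂ {T : M →L[ℂ] N | IsElemBanachCompact (A := A) T} : Set (M →L[ℂ] N))

lemma my_smul_op_smul (c : ℂ) (z : N) (a : A) : c • (z <• a) = z <• (c • a) := by
  have hsub : ∀ x u v : N, @inner A N _ x (u - v) = @inner A N _ x u - @inner A N _ x v := by
    intro x u v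
    refine eq_sub_of_add_eq ?_
    rw [← RightCStarModule.inner_add_right, sub_add_cancel]
  have h : @inner A N _ (c • (z <• a) - z <• (c • a)) (c • (z <• a) - z <• (c • a)) = 0 := by
    simp only [hsub, RightCStarModule.inner_smul_right_complex,
      RightCStarModule.inner_op_smul_right, mul_smul_comm, sub_self]
  exact sub_eq_zero.mp (RightCStarModule.inner_self.mp h)

lemma my_span_repr (G : M →L[ℂ] N)
    (hG : G ∈ Submodule.span ℂ {T : M →L[ℂ] N | IsElemBanachCompact (A := A) T}) :
    ∃ (s : ℕ) (z : Fin s → N) (C : ℝ), 0 ≤ C ∧ ∀ x : M, ∃ a : Fin s → A,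
      (∀ k, ‖a k‖ ≤ C * ‖x‖) ∧ G x = ∑ k, z k <• a k := by
  induction hG using Submodule.span_induction with
  | mem T hT =>
    obtain ⟨z, f, -, hTz⟩ := hT
    refine ⟨1, fun _ => z, ‖f‖, norm_nonneg f, fun x => ⟨fun _ => f x, fun _ => f.le_opNorm x, ?_⟩⟩
    simp [hTz x]
  | zero =>
    exact ⟨0, Fin.elim0, 0, le_rfl, fun x => ⟨Fin.elim0, fun k => k.elim0, by simp⟩⟩
  | add G1 G2 _ _ ih1 ih2 =>
    obtain ⟨s1, z1, C1, hC1, h1⟩ := ih1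
    obtain ⟨s2, z2, C2, hC2, h2⟩ := ih2
    refine ⟨s1 + s2, Fin.append z1 z2, C1 + C2, by positivity, fun x => ?_⟩
    obtain ⟨a1, ha1, hGa1⟩ := h1 x
    obtain ⟨a2, ha2, hGa2⟩ := h2 x
    refine ⟨Fin.append a1 a2, fun k => ?_, ?_⟩
    · refine Fin.addCases (fun i => ?_) (fun i => ?_) k
      · rw [Fin.append_left]
        exact (ha1 i).trans (by nlinarith [norm_nonneg x])
      · rw [Fin.append_right]
        exact (ha2 i).trans (by nlinarith [norm_nonneg x])
    · rw [Fin.sum_univ_add]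
      simp only [Fin.append_left, Fin.append_right]
      simp [hGa1, hGa2]
  | smul c G' _ ih =>
    obtain ⟨s, z, C, hC, h⟩ := ih
    refine ⟨s, z, ‖c‖ * C, by positivity, fun x => ?_⟩
    obtain ⟨a, ha, hGa⟩ := h x
    refine ⟨fun k => c • a k, fun k => ?_, ?_⟩
    · rw [norm_smul, mul_assoc]
      exact mul_le_mul_of_nonneg_left (ha k) (norm_nonneg c)
    · simp only [ContinuousLinearMap.smul_apply, hGa, Finset.smul_sum, my_smul_op_smul]

end

/-- If `F : M → N` is a Banach-compact `A`-linear operator, then the image `F(B)` of the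
closed unit ball of `M` is `A`-precompact: for every `ε > 0` there exist `M_ε > 0` and
`z₁,…,z_s ∈ N` such that every `t ∈ F(B)` is within `ε` of an `A`-linear combination
`Σ z_k a_k` with `‖a_k‖ ≤ M_ε`. -/
theorem stmt_7 {A M N : Type*} [NonUnitalCStarAlgebra A] [PartialOrder A] [StarOrderedRing A]
    [NormedAddCommGroup M] [NormedSpace ℂ M] [SMul Aᵐᵒᵖ M] [RightCStarModule A M] [CompleteSpace M]
    [NormedAddCommGroup N] [NormedSpace ℂ N] [SMul Aᵐᵒᵖ N] [RightCStarModule A N] [CompleteSpace N]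
    (F : M →L[ℂ] N) (hFA : ∀ (a : A) (x : M), F (x <• a) = F x <• a)
    (hF : F ∈ BanachCompactSet A M N) :
    ∀ ε > (0 : ℝ), ∃ Mε > (0 : ℝ), ∃ (s : ℕ) (z : Fin s → N),
      ∀ t ∈ F '' Metric.closedBall (0 : M) 1, ∃ a : Fin s → A,
        (∀ k, ‖a k‖ ≤ Mε) ∧ ‖t - ∑ k, z k <• a k‖ < ε := by
  intro ε hε
  obtain ⟨G, hGmem, hdist⟩ := Metric.mem_closure_iff.mp hF ε hε
  obtain ⟨s, z, C, hC, h⟩ := my_span_repr (A := A) G hGmem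
  refine ⟨C + 1, by linarith, s, z, ?_⟩
  rintro t ⟨x, hx, rfl⟩
  rw [Metric.mem_closedBall, dist_zero_right] at hx
  obtain ⟨a, ha, hGa⟩ := h x
  refine ⟨a, fun k => ?_, ?_⟩
  · calc ‖a k‖ ≤ C * ‖x‖ := ha k
      _ ≤ C * 1 := by nlinarith
      _ ≤ C + 1 := by linarith
  · calc ‖F x - ∑ k, z k <• a k‖ = ‖(F - G) x‖ := by rw [← hGa]; simp
      _ ≤ ‖F - G‖ * ‖x‖ := (F - G).le_opNorm x
      _ ≤ ‖F - G‖ * 1 := by nlinarith [norm_nonneg (F - G)]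
      _ = dist F G := by rw [mul_one, dist_eq_norm]
      _ < ε := hdist
end

section
/- Let A be a finite-dimensional C*-algebra, N a Hilbert A-module, Z ⊆ N a bounded subset, ε > 0, and z₁,…,z_s ∈ N elements such that for every x ∈ Z there exist a₁,…,a_s ∈ A with ‖x − Σ_k z_k a_k‖ < ε. Then there exists a constant M_ε > 0 such that for every x ∈ Z the coefficients a₁,…,a_s can be chosen with ‖a_k‖ ≤ M_ε for all k. -/
open scoped RightActions

section aux
variable {A E : Type*} [CStarAlgebra A] [PartialOrder A] [StarOrderedRing A]
    [NormedAddCommGroup E] [NormedSpace ℂ E] [SMul Aᵐᵒᵖ E] [CStarModuleRight A E]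

omit [StarOrderedRing A] in
lemma my_ext_inner {x y : E} (h : ∀ w : E, inner A w x = inner A w y) : x = y := by
  have hs : ∀ u v w : E, inner A u (v - w) = inner A u v - inner A u w := by
    intro u v w
    rw [eq_sub_iff_add_eq, ← CStarModuleRight.inner_add_right, sub_add_cancel]
  have h2 : inner A (x - y) (x - y) = 0 := by
    rw [hs, h (x - y), sub_self]
  exact sub_eq_zero.mp (CStarModuleRight.inner_self.mp h2)

lemma my_op_smul_add (z : E) (a b : A) : z <• (a + b) = z <• a + z <• b := by
  refine my_ext_inner (A := A) fun w => ?_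
  rw [CStarModuleRight.inner_op_smul_right, CStarModuleRight.inner_add_right, CStarModuleRight.inner_op_smul_right,
    CStarModuleRight.inner_op_smul_right, mul_add]

lemma my_op_smul_csmul (z : E) (c : ℂ) (a : A) : z <• (c • a) = c • (z <• a) := by
  refine my_ext_inner (A := A) fun w => ?_
  rw [CStarModuleRight.inner_op_smul_right, CStarModuleRight.inner_smul_right_complex,
    CStarModuleRight.inner_op_smul_right, mul_smul_comm]

end aux

/-- If `A` is a finite-dimensional C*-algebra, `Z` a bounded subset of a Hilbert
`A`-module, `ε > 0`, and `z₁,…,z_s` elements such that every `x ∈ Z` is within `ε` of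
some combination `Σ_k z_k a_k`, then the coefficients can be chosen with a uniform bound
`‖a_k‖ ≤ M_ε`. -/
theorem stmt_10 {A E : Type*} [CStarAlgebra A] [PartialOrder A] [StarOrderedRing A]
    [FiniteDimensional ℂ A]
    [NormedAddCommGroup E] [NormedSpace ℂ E] [SMul Aᵐᵒᵖ E] [CStarModuleRight A E] [CompleteSpace E]
    (Z : Set E) (hZb : Bornology.IsBounded Z) (ε : ℝ) (hε : 0 < ε)
    (s : ℕ) (z : Fin s → E)
    (h : ∀ x ∈ Z, ∃ a : Fin s → A, ‖x - ∑ k, z k <• a k‖ < ε) :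
    ∃ M > (0 : ℝ), ∀ x ∈ Z, ∃ a : Fin s → A,
      (∀ k, ‖a k‖ ≤ M) ∧ ‖x - ∑ k, z k <• a k‖ < ε := by
  -- the linear map G : A^s → E
  let F : (Fin s → A) →ₗ[ℂ] E :=
    { toFun := fun a => ∑ k, z k <• a k
      map_add' := by
        intro a b
        simp only [Pi.add_apply]
        rw [← Finset.sum_add_distrib]
        exact Finset.sum_congr rfl fun k _ => my_op_smul_add (z k) (a k) (b k)
      map_smul' := by
        intro c a
        simp only [Pi.smul_apply, RingHom.id_apply]
        rw [Finset.smul_sum]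
        exact Finset.sum_congr rfl fun k _ => my_op_smul_csmul (z k) c (a k) }
  -- complement of the kernel
  obtain ⟨K, hK⟩ := Submodule.exists_isCompl (LinearMap.ker F)
  set fK : K →ₗ[ℂ] E := F.comp K.subtype with hfK
  have hinj : Function.Injective fK := by
    intro a b hab
    have : (a : Fin s → A) - b ∈ LinearMap.ker F ⊓ K := by
      refine ⟨?_, K.sub_mem a.2 b.2⟩
      show F ((a : Fin s → A) - b) = 0
      rw [map_sub, sub_eq_zero]
      exact hab
    rw [hK.inf_eq_bot] at this
    exact Subtype.ext (sub_eq_zero.mp (by simpa using this))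
  let e : K ≃ₗ[ℂ] LinearMap.range fK := LinearEquiv.ofInjective fK hinj
  -- the inverse is continuous since the domain is finite-dimensional
  let T : LinearMap.range fK →ₗ[ℂ] K := e.symm.toLinearMap
  have hTcont : Continuous T := T.continuous_of_finiteDimensional
  let Tc : LinearMap.range fK →L[ℂ] K := ⟨T, hTcont⟩
  obtain ⟨R, hR⟩ := hZb.exists_norm_le
  set C : ℝ := ‖Tc‖ with hC
  refine ⟨C * (max R 0 + ε) + 1, by positivity, ?_⟩
  intro x hx
  obtain ⟨a, ha⟩ := h x hx
  -- F a lies in the range of fK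
  have hmem : F a ∈ LinearMap.range fK := by
    have : a ∈ K ⊔ LinearMap.ker F := by rw [sup_comm, hK.sup_eq_top]; trivial
    obtain ⟨k, hk, n, hn, hkn⟩ := Submodule.mem_sup.mp this
    refine ⟨⟨k, hk⟩, ?_⟩
    have : F a = F k + F n := by rw [← map_add, hkn]
    rw [LinearMap.mem_ker.mp hn] at this
    simp [fK, this]
  -- pick the preimage in K
  set b : K := Tc ⟨F a, hmem⟩ with hb
  have hFb : F (b : Fin s → A) = F a := by
    have := e.apply_symm_apply ⟨F a, hmem⟩
    have h2 : fK (e.symm ⟨F a, hmem⟩) = F a := congrArg Subtype.val this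
    simpa [fK, Tc, T, b] using h2
  refine ⟨(b : Fin s → A), fun k => ?_, by
    rw [show (∑ k, z k <• (b : Fin s → A) k) = F (b : Fin s → A) from rfl, hFb]
    exact ha⟩
  -- norm bound
  have hFa : ‖F a‖ ≤ max R 0 + ε := by
    have h1 : ‖F a‖ ≤ ‖F a - x‖ + ‖x‖ := by
      simpa using norm_add_le (F a - x) x
    have h2 : ‖F a - x‖ = ‖x - F a‖ := norm_sub_rev _ _
    have h3 : ‖x - F a‖ < ε := by simpa [F] using ha
    have h4 : ‖x‖ ≤ max R 0 := le_trans (hR x hx) (le_max_left _ _)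
    linarith
  have hbn : ‖b‖ ≤ C * (max R 0 + ε) := by
    calc ‖b‖ ≤ C * ‖(⟨F a, hmem⟩ : LinearMap.range fK)‖ := Tc.le_opNorm _
    _ = C * ‖F a‖ := rfl
    _ ≤ C * (max R 0 + ε) := by
        have : (0:ℝ) ≤ C := hC ▸ norm_nonneg Tc
        nlinarith
  calc ‖(b : Fin s → A) k‖ ≤ ‖(b : Fin s → A)‖ := norm_le_pi_norm _ k
  _ = ‖b‖ := rfl
  _ ≤ C * (max R 0 + ε) := hbn
  _ ≤ C * (max R 0 + ε) + 1 := by linarith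
end

section
/- Let A = c be the C*-algebra of convergent complex sequences and N = ℓ²(c) the standard Hilbert c-module with standard basis {e_j}. Let δ^j ∈ c be the indicator sequence of j, and define the bounded c-linear operator F : N → N by F(Σ_k e_k a^k) = Σ_k e_k δ^k a^k. Then for every n ∈ ℕ, the element x = e_{n+1}δ^{n+1} lies in the image under F of the unit ball and satisfies ‖x − Σ_{j=1}^n e_j⟨e_j,x⟩‖ = 1; consequently sup over the image of the unit ball of ‖x − Σ_{j=1}^n e_j⟨e_j,x⟩‖ ≥ 1 for every n, so the image of the unit ball is not A-precompact. -/
open scoped RightActions ComplexOrder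

/-- The indicator sequence `δ^j ∈ c = C(ℕ⁺, ℂ)` of the point `j`. -/
noncomputable def deltaSeq (j : ℕ) : C(OnePoint ℕ, ℂ) :=
  letI := Classical.decEq (OnePoint ℕ)
  ⟨fun x => if x = (j : OnePoint ℕ) then 1 else 0, by
    have h : IsClopen {(j : OnePoint ℕ)} := by
      constructor
      · exact isClosed_singleton
      · simpa using OnePoint.isOpenEmbedding_coe.isOpenMap {j} (isOpen_discrete _)
    have hs : {x : OnePoint ℕ | x = (j : OnePoint ℕ)} = {(j : OnePoint ℕ)} := by
      ext; simp
    refine continuous_if (fun a ha => ?_) continuous_const.continuousOn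
      continuous_const.continuousOn
    rw [hs, h.frontier_eq] at ha
    exact absurd ha (Set.notMem_empty a)⟩

/-- The December 2024 Mathlib `CStarModule` (right `A`-action via `Aᵐᵒᵖ`), kept verbatim. -/
class CStarModuleOld (A E : Type*) [NonUnitalSemiring A] [StarRing A] [Module ℂ A]
    [AddCommGroup E] [Module ℂ E] [PartialOrder A] [SMul Aᵐᵒᵖ E] [Norm A] [Norm E]
    extends Inner A E where
  inner_add_right {x} {y} {z} : inner x (y + z) = inner x y + inner x z
  inner_self_nonneg {x} : 0 ≤ inner x x
  inner_self {x} : inner x x = 0 ↔ x = 0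
  inner_op_smul_right {a : A} {x y : E} : inner x (y <• a) = inner x y * a
  inner_smul_right_complex {z : ℂ} {x} {y} : inner x (z • y) = z • inner x y
  star_inner x y : star (inner x y) = inner y x
  norm_eq_sqrt_norm_inner_self x : ‖x‖ = √‖inner x x‖

/-- Condition (a): `Z` can be approximated by `A`-linear combinations of finitely many
elements with uniformly bounded coefficients. -/
def APrecompactCond {A E : Type*} [NonUnitalCStarAlgebra A] [PartialOrder A]
    [StarOrderedRing A] [NormedAddCommGroup E] [NormedSpace ℂ E] [SMul Aᵐᵒᵖ E]
    [CStarModuleOld A E] (Z : Set E) : Prop :=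
  ∀ ε > (0 : ℝ), ∃ M > (0 : ℝ), ∃ (s : ℕ) (z : Fin s → E),
    ∀ x ∈ Z, ∃ a : Fin s → A, (∀ k, ‖a k‖ ≤ M) ∧ ‖x - ∑ k, z k <• a k‖ < ε

namespace CStarModuleOld
variable {E : Type*} [NormedAddCommGroup E] [NormedSpace ℂ E]
    [SMul C(OnePoint ℕ, ℂ)ᵐᵒᵖ E] [CStarModuleOld C(OnePoint ℕ, ℂ) E]

lemma inner_op_smul_left {a : C(OnePoint ℕ, ℂ)} {x y : E} :
    (inner C(OnePoint ℕ, ℂ) (x <• a) y : C(OnePoint ℕ, ℂ)) = star a * inner C(OnePoint ℕ, ℂ) x y := by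
  rw [← CStarModuleOld.star_inner, CStarModuleOld.inner_op_smul_right, star_mul,
    CStarModuleOld.star_inner]

lemma inner_sub_right {x y z : E} :
    (inner C(OnePoint ℕ, ℂ) x (y - z) : C(OnePoint ℕ, ℂ))
      = inner C(OnePoint ℕ, ℂ) x y - inner C(OnePoint ℕ, ℂ) x z := by
  refine eq_sub_of_add_eq ?_
  rw [← CStarModuleOld.inner_add_right, sub_add_cancel]

lemma inner_sub_left {x y z : E} :
    (inner C(OnePoint ℕ, ℂ) (x - y) z : C(OnePoint ℕ, ℂ))
      = inner C(OnePoint ℕ, ℂ) x z - inner C(OnePoint ℕ, ℂ) y z := by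
  rw [← CStarModuleOld.star_inner, inner_sub_right, star_sub, CStarModuleOld.star_inner,
    CStarModuleOld.star_inner]

lemma inner_sum_right {ι : Type*} {s : Finset ι} {x : E} {y : ι → E} :
    (inner C(OnePoint ℕ, ℂ) x (∑ i ∈ s, y i) : C(OnePoint ℕ, ℂ))
      = ∑ i ∈ s, inner C(OnePoint ℕ, ℂ) x (y i) :=
  map_sum (AddMonoidHom.mk' (fun y : E => (inner C(OnePoint ℕ, ℂ) x y : C(OnePoint ℕ, ℂ)))
    fun _ _ => CStarModuleOld.inner_add_right) y s

lemma inner_sum_left {ι : Type*} {s : Finset ι} {x : ι → E} {y : E} :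
    (inner C(OnePoint ℕ, ℂ) (∑ i ∈ s, x i) y : C(OnePoint ℕ, ℂ))
      = ∑ i ∈ s, inner C(OnePoint ℕ, ℂ) (x i) y := by
  rw [← CStarModuleOld.star_inner, inner_sum_right, star_sum]
  simp only [CStarModuleOld.star_inner]

variable (E) in
lemma norm_inner_le {x y : E} :
    ‖(inner C(OnePoint ℕ, ℂ) x y : C(OnePoint ℕ, ℂ))‖ ≤ ‖x‖ * ‖y‖ := by
  letI : SMul C(OnePoint ℕ, ℂ) E := ⟨fun a x => x <• a⟩
  letI : CStarModule C(OnePoint ℕ, ℂ) E :=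
    { toInner := (inferInstance : CStarModuleOld C(OnePoint ℕ, ℂ) E).toInner
      inner_add_right := CStarModuleOld.inner_add_right
      inner_self_nonneg := CStarModuleOld.inner_self_nonneg
      inner_self := CStarModuleOld.inner_self
      inner_op_smul_right := fun {a x y} => by
        show inner C(OnePoint ℕ, ℂ) x (y <• a) = _
        rw [CStarModuleOld.inner_op_smul_right, mul_comm]
      inner_smul_right_complex := CStarModuleOld.inner_smul_right_complex
      star_inner := CStarModuleOld.star_inner
      norm_eq_sqrt_norm_inner_self := CStarModuleOld.norm_eq_sqrt_norm_inner_self }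
  exact _root_.CStarModule.norm_inner_le E

end CStarModuleOld

lemma deltaSeq_apply (j : ℕ) (x : OnePoint ℕ) :
    letI := Classical.decEq (OnePoint ℕ)
    deltaSeq j x = if x = (j : OnePoint ℕ) then 1 else 0 := rfl

lemma deltaSeq_apply_self (j : ℕ) : deltaSeq j (j : OnePoint ℕ) = 1 := by
  rw [deltaSeq_apply]; simp

lemma star_deltaSeq (j : ℕ) : star (deltaSeq j) = deltaSeq j := by
  ext x
  rw [ContinuousMap.star_apply, deltaSeq_apply]
  split <;> simp

lemma deltaSeq_mul_self (j : ℕ) : deltaSeq j * deltaSeq j = deltaSeq j := by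
  ext x
  rw [ContinuousMap.mul_apply, deltaSeq_apply]
  split <;> simp

lemma norm_deltaSeq (j : ℕ) : ‖deltaSeq j‖ = 1 := by
  refine le_antisymm ?_ ?_
  · rw [ContinuousMap.norm_le _ zero_le_one]
    intro x
    rw [deltaSeq_apply]
    split <;> simp
  · calc (1:ℝ) = ‖deltaSeq j (j : OnePoint ℕ)‖ := by rw [deltaSeq_apply_self]; simp
      _ ≤ ‖deltaSeq j‖ := ContinuousMap.norm_coe_le_norm _ _

section Aux
variable {E : Type*} [NormedAddCommGroup E] [NormedSpace ℂ E]
    [SMul C(OnePoint ℕ, ℂ)ᵐᵒᵖ E] [CStarModuleOld C(OnePoint ℕ, ℂ) E]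
    (e : ℕ → E)
    (he : ∀ i j, (inner C(OnePoint ℕ, ℂ) (e i) (e j) : C(OnePoint ℕ, ℂ)) = if i = j then 1 else 0)

include he

lemma inner_em (m : ℕ) :
    (inner C(OnePoint ℕ, ℂ) (e m <• deltaSeq m) (e m <• deltaSeq m) : C(OnePoint ℕ, ℂ)) = deltaSeq m := by
  rw [CStarModuleOld.inner_op_smul_right, CStarModuleOld.inner_op_smul_left, he, if_pos rfl,
    mul_one, star_deltaSeq, deltaSeq_mul_self]

lemma norm_em (m : ℕ) : ‖e m <• deltaSeq m‖ = 1 := by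
  rw [CStarModuleOld.norm_eq_sqrt_norm_inner_self (A := C(OnePoint ℕ, ℂ)), inner_em e he, norm_deltaSeq]
  simp

lemma norm_e (m : ℕ) : ‖e m‖ = 1 := by
  rw [CStarModuleOld.norm_eq_sqrt_norm_inner_self (A := C(OnePoint ℕ, ℂ)), he, if_pos rfl, norm_one]
  simp

lemma coef_decay (hrec : ∀ x : E, HasSum (fun k => e k <• (inner C(OnePoint ℕ, ℂ) (e k) x : C(OnePoint ℕ, ℂ))) x)
    (z : E) {ε : ℝ} (hε : 0 < ε) :
    ∃ N : ℕ, ∀ m ≥ N, ‖(inner C(OnePoint ℕ, ℂ) (e m) z : C(OnePoint ℕ, ℂ)) ((m : ℕ) : OnePoint ℕ)‖ < ε := by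
  have h := Metric.tendsto_nhds.mp (hrec z) ε hε
  rw [SummationFilter.unconditional_filter, Filter.eventually_atTop] at h
  obtain ⟨t₀, ht₀⟩ := h
  refine ⟨t₀.sup id + 1, fun m hm => ?_⟩
  have hmt : m ∉ t₀ := fun hmem => by
    have := Finset.le_sup (f := id) hmem
    simp only [id] at this
    omega
  set S : E := ∑ j ∈ t₀, e j <• (inner C(OnePoint ℕ, ℂ) (e j) z : C(OnePoint ℕ, ℂ)) with hS
  have hdist : ‖z - S‖ < ε := by
    have := ht₀ t₀ le_rfl
    rw [dist_eq_norm] at this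
    rw [← norm_neg]
    simpa [hS, neg_sub] using this
  have hinner : (inner C(OnePoint ℕ, ℂ) (e m <• deltaSeq m) (z - S) : C(OnePoint ℕ, ℂ))
      = star (deltaSeq m) * (inner C(OnePoint ℕ, ℂ) (e m) z : C(OnePoint ℕ, ℂ)) := by
    rw [CStarModuleOld.inner_sub_right]
    simp only [CStarModuleOld.inner_op_smul_left]
    have hSz : (inner C(OnePoint ℕ, ℂ) (e m) S : C(OnePoint ℕ, ℂ)) = 0 := by
      rw [hS, CStarModuleOld.inner_sum_right]
      refine Finset.sum_eq_zero fun j hj => ?_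
      rw [CStarModuleOld.inner_op_smul_right, he, if_neg, zero_mul]
      exact fun hmj => hmt (hmj ▸ hj)
    rw [hSz, mul_zero, sub_zero]
  have hval : (inner C(OnePoint ℕ, ℂ) (e m) z : C(OnePoint ℕ, ℂ)) ((m : ℕ) : OnePoint ℕ)
      = (inner C(OnePoint ℕ, ℂ) (e m <• deltaSeq m) (z - S) : C(OnePoint ℕ, ℂ)) ((m : ℕ) : OnePoint ℕ) := by
    rw [hinner, star_deltaSeq, ContinuousMap.mul_apply, deltaSeq_apply_self, one_mul]
  calc ‖(inner C(OnePoint ℕ, ℂ) (e m) z : C(OnePoint ℕ, ℂ)) ((m : ℕ) : OnePoint ℕ)‖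
      = ‖(inner C(OnePoint ℕ, ℂ) (e m <• deltaSeq m) (z - S) : C(OnePoint ℕ, ℂ)) ((m : ℕ) : OnePoint ℕ)‖ := by
        rw [hval]
    _ ≤ ‖(inner C(OnePoint ℕ, ℂ) (e m <• deltaSeq m) (z - S) : C(OnePoint ℕ, ℂ))‖ :=
        ContinuousMap.norm_coe_le_norm _ _
    _ ≤ ‖e m <• deltaSeq m‖ * ‖z - S‖ := CStarModuleOld.norm_inner_le E
    _ = ‖z - S‖ := by rw [norm_em e he, one_mul]
    _ < ε := hdist
end Aux

/-- Let `A = c = C(ℕ⁺, ℂ)` be the algebra of convergent sequences, `E = ℓ²(c)` its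
standard module (presented by its standard orthonormal Parseval basis `{e_j}`), and
`F : E → E` the bounded `c`-linear operator with `F(e_k a) = e_k δ^k a`.  Then for each
`n`, the element `x = e_{n+1}δ^{n+1}` lies in the image of the unit ball under `F` and
satisfies `‖x − Σ_{j=1}^n e_j⟨e_j,x⟩‖ = 1`; consequently the corresponding supremum is
`≥ 1` for every `n`, so the image of the unit ball is not `A`-precompact. -/
theorem stmt_11 {E : Type*} [NormedAddCommGroup E] [NormedSpace ℂ E]
    [SMul C(OnePoint ℕ, ℂ)ᵐᵒᵖ E] [CStarModuleOld C(OnePoint ℕ, ℂ) E] [CompleteSpace E]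
    (e : ℕ → E)
    (he : ∀ i j, (inner C(OnePoint ℕ, ℂ) (e i) (e j) : C(OnePoint ℕ, ℂ)) = if i = j then 1 else 0)
    (hrec : ∀ x : E, HasSum (fun k => e k <• (inner C(OnePoint ℕ, ℂ) (e k) x : C(OnePoint ℕ, ℂ))) x)
    (F : E →L[ℂ] E)
    (hFA : ∀ (a : C(OnePoint ℕ, ℂ)) (x : E), F (x <• a) = F x <• a)
    (hF : ∀ k, F (e k) = e k <• deltaSeq k) :
    (∀ n : ℕ,
      (e (n+1) <• deltaSeq (n+1)) ∈ F '' Metric.closedBall (0 : E) 1 ∧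
      ‖(e (n+1) <• deltaSeq (n+1)) - ∑ j ∈ Finset.Icc 1 n,
          e j <• (inner C(OnePoint ℕ, ℂ) (e j) (e (n+1) <• deltaSeq (n+1)) : C(OnePoint ℕ, ℂ))‖ = 1) ∧
    (∀ n : ℕ, ∃ x ∈ F '' Metric.closedBall (0 : E) 1,
      1 ≤ ‖x - ∑ j ∈ Finset.Icc 1 n, e j <• (inner C(OnePoint ℕ, ℂ) (e j) x : C(OnePoint ℕ, ℂ))‖) ∧
    ¬ APrecompactCond (A := C(OnePoint ℕ, ℂ)) (F '' Metric.closedBall (0 : E) 1) := by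

  have hmem : ∀ m : ℕ, (e m <• deltaSeq m) ∈ F '' Metric.closedBall (0 : E) 1 := by
    intro m
    refine ⟨e m, ?_, hF m⟩
    rw [Metric.mem_closedBall, dist_zero_right, norm_e e he]
  have part1 : ∀ n : ℕ,
      (e (n+1) <• deltaSeq (n+1)) ∈ F '' Metric.closedBall (0 : E) 1 ∧
      ‖(e (n+1) <• deltaSeq (n+1)) - ∑ j ∈ Finset.Icc 1 n,
          e j <• (inner C(OnePoint ℕ, ℂ) (e j) (e (n+1) <• deltaSeq (n+1)) : C(OnePoint ℕ, ℂ))‖ = 1 := by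
    intro n
    refine ⟨hmem _, ?_⟩
    set x : E := e (n+1) <• deltaSeq (n+1) with hxdef
    set S : E := ∑ j ∈ Finset.Icc 1 n, e j <• (inner C(OnePoint ℕ, ℂ) (e j) x : C(OnePoint ℕ, ℂ)) with hSdef
    have hc : ∀ j ∈ Finset.Icc 1 n, (inner C(OnePoint ℕ, ℂ) (e j) x : C(OnePoint ℕ, ℂ)) = 0 := by
      intro j hj
      rw [hxdef, CStarModuleOld.inner_op_smul_right, he, if_neg, zero_mul]
      have := (Finset.mem_Icc.mp hj).2
      omega
    have hxS : (inner C(OnePoint ℕ, ℂ) x S : C(OnePoint ℕ, ℂ)) = 0 := by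
      rw [hSdef, CStarModuleOld.inner_sum_right]
      refine Finset.sum_eq_zero fun j hj => ?_
      rw [CStarModuleOld.inner_op_smul_right, hc j hj, mul_zero]
    have hSx : (inner C(OnePoint ℕ, ℂ) S x : C(OnePoint ℕ, ℂ)) = 0 := by
      rw [← CStarModuleOld.star_inner, hxS, star_zero]
    have hSS : (inner C(OnePoint ℕ, ℂ) S S : C(OnePoint ℕ, ℂ)) = 0 := by
      rw [hSdef, CStarModuleOld.inner_sum_left]
      refine Finset.sum_eq_zero fun j hj => ?_
      rw [CStarModuleOld.inner_op_smul_left, hc j hj, star_zero, zero_mul]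
    have hkey : (inner C(OnePoint ℕ, ℂ) (x - S) (x - S) : C(OnePoint ℕ, ℂ)) = deltaSeq (n+1) := by
      rw [CStarModuleOld.inner_sub_right, CStarModuleOld.inner_sub_left,
        CStarModuleOld.inner_sub_left, hxS, hSx, hSS, hxdef, inner_em e he]
      simp
    rw [CStarModuleOld.norm_eq_sqrt_norm_inner_self (A := C(OnePoint ℕ, ℂ)), hkey, norm_deltaSeq, Real.sqrt_one]
  refine ⟨part1, fun n => ⟨_, (part1 n).1, (part1 n).2.ge⟩, ?_⟩
  intro hA
  obtain ⟨M, hM, s, z, hx⟩ := hA (1/2) (by norm_num)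
  set εc : ℝ := 1 / (2 * (s+1) * M) with hεc
  have hεcpos : 0 < εc := by positivity
  choose N hN using fun k : Fin s => coef_decay e he hrec (z k) hεcpos
  set m : ℕ := Finset.univ.sup N with hm
  obtain ⟨a, ha, hna⟩ := hx (e m <• deltaSeq m) (hmem m)
  set y : E := ∑ k, z k <• a k with hy
  set g : C(OnePoint ℕ, ℂ) := inner C(OnePoint ℕ, ℂ) (e m <• deltaSeq m) ((e m <• deltaSeq m) - y) with hg
  have hgval : g ((m : ℕ) : OnePoint ℕ)
      = 1 - ∑ k, (inner C(OnePoint ℕ, ℂ) (e m) (z k) : C(OnePoint ℕ, ℂ)) ((m : ℕ) : OnePoint ℕ)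
          * (a k) ((m : ℕ) : OnePoint ℕ) := by
    rw [hg, CStarModuleOld.inner_sub_right, inner_em e he, hy, CStarModuleOld.inner_sum_right]
    simp only [CStarModuleOld.inner_op_smul_right, CStarModuleOld.inner_op_smul_left, star_deltaSeq]
    rw [ContinuousMap.sub_apply, deltaSeq_apply_self, ContinuousMap.sum_apply]
    congr 1
    refine Finset.sum_congr rfl fun k _ => ?_
    rw [ContinuousMap.mul_apply, ContinuousMap.mul_apply, deltaSeq_apply_self, one_mul]
  have hb1 : ‖g ((m : ℕ) : OnePoint ℕ)‖ < 1/2 := by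
    calc ‖g ((m : ℕ) : OnePoint ℕ)‖ ≤ ‖g‖ := ContinuousMap.norm_coe_le_norm _ _
      _ ≤ ‖e m <• deltaSeq m‖ * ‖e m <• deltaSeq m - y‖ := CStarModuleOld.norm_inner_le E
      _ = ‖e m <• deltaSeq m - y‖ := by rw [norm_em e he, one_mul]
      _ < 1/2 := hna
  have hb2 : ‖∑ k, (inner C(OnePoint ℕ, ℂ) (e m) (z k) : C(OnePoint ℕ, ℂ)) ((m : ℕ) : OnePoint ℕ)
      * (a k) ((m : ℕ) : OnePoint ℕ)‖ < 1/2 := by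
    have hterm : ∀ k : Fin s, ‖(inner C(OnePoint ℕ, ℂ) (e m) (z k) : C(OnePoint ℕ, ℂ)) ((m : ℕ) : OnePoint ℕ)
        * (a k) ((m : ℕ) : OnePoint ℕ)‖ ≤ εc * M := by
      intro k
      refine (norm_mul_le _ _).trans (mul_le_mul (le_of_lt ?_) ?_ (norm_nonneg _) hεcpos.le)
      · exact hN k m (Finset.le_sup (Finset.mem_univ k))
      · exact (ContinuousMap.norm_coe_le_norm _ _).trans (ha k)
    calc ‖∑ k, (inner C(OnePoint ℕ, ℂ) (e m) (z k) : C(OnePoint ℕ, ℂ)) ((m : ℕ) : OnePoint ℕ)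
        * (a k) ((m : ℕ) : OnePoint ℕ)‖
        ≤ ∑ k : Fin s, εc * M := norm_sum_le_of_le _ fun k _ => hterm k
      _ = s * (εc * M) := by simp [mul_comm]
      _ < 1/2 := by
          have hεM : εc * M = 1 / (2 * (s+1)) := by
            rw [hεc]
            field_simp
          rw [hεM]
          rw [mul_one_div, div_lt_div_iff₀ (by positivity) (by norm_num)]
          push_cast
          ring_nf
          nlinarith [Nat.cast_nonneg (α := ℝ) s]
  have h1 : (1 : ℂ) = g ((m : ℕ) : OnePoint ℕ)
      + ∑ k, (inner C(OnePoint ℕ, ℂ) (e m) (z k) : C(OnePoint ℕ, ℂ)) ((m : ℕ) : OnePoint ℕ)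
          * (a k) ((m : ℕ) : OnePoint ℕ) := by
    rw [hgval]; ring
  have := norm_add_le (g ((m : ℕ) : OnePoint ℕ))
      (∑ k, (inner C(OnePoint ℕ, ℂ) (e m) (z k) : C(OnePoint ℕ, ℂ)) ((m : ℕ) : OnePoint ℕ)
          * (a k) ((m : ℕ) : OnePoint ℕ))
  rw [← h1, norm_one] at this
  linarith
end

section
/- With A = c (convergent sequences), N = ℓ²(c), F(Σ_k e_k a^k) = Σ_k e_k δ^k a^k, and v = Σ_{j∈ℕ} (1/j!) e_j δ^j ∈ N, the element v satisfies F(v) = v, v·δ^k = (1/k!)·e_k δ^k for each k, and for every y in the image F(B) of the unit ball B and every ε > 0 there exist finitely many coefficients b₁,…,b_N ∈ c with ‖y − Σ_{k=1}^N v·b_k‖ < ε; in particular the closure of the range of F equals the closed A-span of the single element v. -/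
open scoped RightActions ComplexOrder

/-- Left action of the commutative algebra `c` induced by a right action (porting shim:
current `CStarModule` expects a left action `SMul A E`). -/
noncomputable instance smulOfOpSMulConvSeq {E : Type*} [SMul C(OnePoint ℕ, ℂ)ᵐᵒᵖ E] :
    SMul C(OnePoint ℕ, ℂ) E :=
  ⟨fun a x => MulOpposite.op a • x⟩


section Aux
variable {E : Type*} [NormedAddCommGroup E] [NormedSpace ℂ E] [SMul C(OnePoint ℕ, ℂ)ᵐᵒᵖ E] [CStarModule C(OnePoint ℕ, ℂ) E]

lemma aux_inner_rsmul (z x : E) (a : C(OnePoint ℕ, ℂ)) : (inner C(OnePoint ℕ, ℂ) z (x <• a) : C(OnePoint ℕ, ℂ)) = inner C(OnePoint ℕ, ℂ) z x * a := by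
  rw [mul_comm]; exact CStarModule.inner_op_smul_right

lemma aux_inner_rsmul_left (z x : E) (a : C(OnePoint ℕ, ℂ)) :
    (inner C(OnePoint ℕ, ℂ) (x <• a) z : C(OnePoint ℕ, ℂ)) = star a * inner C(OnePoint ℕ, ℂ) x z := by
  rw [mul_comm]; exact CStarModule.inner_op_smul_left

lemma aux_ext {x y : E} (h : ∀ z : E, (inner C(OnePoint ℕ, ℂ) z x : C(OnePoint ℕ, ℂ)) = inner C(OnePoint ℕ, ℂ) z y) : x = y := by
  have h2 : (inner C(OnePoint ℕ, ℂ) (x - y) (x - y) : C(OnePoint ℕ, ℂ)) = 0 := by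
    rw [CStarModule.inner_sub_right, h, sub_self]
  exact sub_eq_zero.mp (CStarModule.inner_self.mp h2)

lemma aux_add_smul (x y : E) (a : C(OnePoint ℕ, ℂ)) : (x + y) <• a = x <• a + y <• a := by
  refine aux_ext fun z => ?_
  simp [aux_inner_rsmul, add_mul]

lemma aux_csmul (c : ℂ) (x : E) (a : C(OnePoint ℕ, ℂ)) : (c • x) <• a = c • (x <• a) := by
  refine aux_ext fun z => ?_
  simp [aux_inner_rsmul, smul_mul_assoc]

lemma aux_rsmul (r : ℝ) (x : E) (a : C(OnePoint ℕ, ℂ)) : (r • x) <• a = r • (x <• a) := by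
  refine aux_ext fun z => ?_
  simp [aux_inner_rsmul, smul_mul_assoc]

lemma aux_smul_csmul (c : ℂ) (x : E) (a : C(OnePoint ℕ, ℂ)) : x <• (c • a) = c • (x <• a) := by
  refine aux_ext fun z => ?_
  rw [aux_inner_rsmul, CStarModule.inner_smul_right_complex,
    aux_inner_rsmul, mul_smul_comm]

lemma aux_smul_assoc (x : E) (a b : C(OnePoint ℕ, ℂ)) : (x <• a) <• b = x <• (a * b) := by
  refine aux_ext fun z => ?_
  rw [aux_inner_rsmul, aux_inner_rsmul,
    aux_inner_rsmul, mul_assoc]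

lemma aux_smul_zero (x : E) : x <• (0 : C(OnePoint ℕ, ℂ)) = 0 := by
  refine aux_ext fun z => ?_
  rw [aux_inner_rsmul, mul_zero, CStarModule.inner_zero_right]

lemma aux_norm_smul_le (x : E) (a : C(OnePoint ℕ, ℂ)) : ‖x <• a‖ ≤ ‖a‖ * ‖x‖ := by
  have h1 : (inner C(OnePoint ℕ, ℂ) (x <• a) (x <• a) : C(OnePoint ℕ, ℂ)) = star a * (inner C(OnePoint ℕ, ℂ) x x * a) := by
    rw [aux_inner_rsmul_left, aux_inner_rsmul]
  have h2 : ‖(inner C(OnePoint ℕ, ℂ) (x <• a) (x <• a) : C(OnePoint ℕ, ℂ))‖ ≤ (‖a‖ * ‖x‖) ^ 2 := by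
    rw [h1]
    calc ‖star a * ((inner C(OnePoint ℕ, ℂ) x x : C(OnePoint ℕ, ℂ)) * a)‖ ≤ ‖star a‖ * (‖(inner C(OnePoint ℕ, ℂ) x x : C(OnePoint ℕ, ℂ))‖ * ‖a‖) :=
          (norm_mul_le _ _).trans (by gcongr; exact norm_mul_le _ _)
      _ = ‖a‖ ^ 2 * ‖(inner C(OnePoint ℕ, ℂ) x x : C(OnePoint ℕ, ℂ))‖ := by rw [norm_star]; ring
      _ = ‖a‖ ^ 2 * ‖x‖ ^ 2 := by rw [← CStarModule.norm_sq_eq C(OnePoint ℕ, ℂ)]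
      _ = (‖a‖ * ‖x‖) ^ 2 := by ring
  rw [CStarModule.norm_eq_sqrt_norm_inner_self (A := C(OnePoint ℕ, ℂ))]
  calc √‖(inner C(OnePoint ℕ, ℂ) (x <• a) (x <• a) : C(OnePoint ℕ, ℂ))‖ ≤ √((‖a‖ * ‖x‖) ^ 2) := Real.sqrt_le_sqrt h2
    _ = ‖a‖ * ‖x‖ := Real.sqrt_sq (by positivity)

/-- Right multiplication by `a` as a continuous linear map. -/
noncomputable def auxCLM (a : C(OnePoint ℕ, ℂ)) : E →L[ℂ] E :=
  LinearMap.mkContinuous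
    { toFun := fun x => x <• a
      map_add' := fun x y => aux_add_smul x y a
      map_smul' := fun c x => aux_csmul c x a } ‖a‖
    (fun x => aux_norm_smul_le x a)

@[simp] lemma auxCLM_apply (a : C(OnePoint ℕ, ℂ)) (x : E) : auxCLM a x = x <• a := rfl

end Aux

section DeltaAux

lemma deltaSeq_mul (j k : ℕ) :
    deltaSeq j * deltaSeq k = if j = k then deltaSeq j else 0 := by
  classical
  ext x
  simp only [deltaSeq, ContinuousMap.mul_apply, ContinuousMap.coe_mk]
  by_cases h : j = k
  · subst h
    simp only [if_pos rfl, ContinuousMap.coe_mk]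
    split_ifs with h1 <;> simp [h1]
  · simp only [if_neg h, ContinuousMap.zero_apply]
    split_ifs with h1 h2 <;> try simp
    exact absurd (OnePoint.coe_injective (h1.symm.trans h2)) h

end DeltaAux


/-- Let `A = c = C(ℕ⁺, ℂ)`, `E = ℓ²(c)` (presented by its standard orthonormal Parseval
basis `{e_j}`), `F : E → E` the bounded `c`-linear operator with `F(e_k a) = e_k δ^k a`,
and `v = Σ_j (1/j!) e_j δ^j`.  Then `F v = v`, `v·δ^k = (1/k!)·e_k δ^k` for each `k`,
every `y` in the image of the unit ball under `F` can be approximated arbitrarily well by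
finite combinations `Σ_k v·b_k`; in particular the closure of the range of `F` equals the
closed `A`-span of the single element `v`. -/
theorem stmt_12 {E : Type*} [NormedAddCommGroup E] [NormedSpace ℂ E]
    [SMul C(OnePoint ℕ, ℂ)ᵐᵒᵖ E] [CStarModule C(OnePoint ℕ, ℂ) E] [CompleteSpace E]
    (e : ℕ → E)
    (he : ∀ i j, (inner C(OnePoint ℕ, ℂ) (e i) (e j) : C(OnePoint ℕ, ℂ)) = if i = j then 1 else 0)
    (hrec : ∀ x : E, HasSum (fun k => e k <• (inner C(OnePoint ℕ, ℂ) (e k) x : C(OnePoint ℕ, ℂ))) x)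
    (F : E →L[ℂ] E)
    (hFA : ∀ (a : C(OnePoint ℕ, ℂ)) (x : E), F (x <• a) = F x <• a)
    (hF : ∀ k, F (e k) = e k <• deltaSeq k)
    (v : E)
    (hv : HasSum (fun j : ℕ => ((1 : ℝ) / (j.factorial : ℝ)) • (e j <• deltaSeq j)) v) :
    F v = v ∧
    (∀ k : ℕ, v <• deltaSeq k = ((1 : ℝ) / (k.factorial : ℝ)) • (e k <• deltaSeq k)) ∧
    (∀ y ∈ F '' Metric.closedBall (0 : E) 1, ∀ ε > (0 : ℝ),
      ∃ (N : ℕ) (b : Fin N → C(OnePoint ℕ, ℂ)), ‖y - ∑ k, v <• b k‖ < ε) ∧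
    closure (Set.range F) =
      closure (Submodule.span ℂ {w : E | ∃ a : C(OnePoint ℕ, ℂ), w = v <• a} : Set E) := by

  -- Part 1 : F v = v
  have h1 : F v = v := by
    have hs := hv.mapL F
    have heq : ∀ j : ℕ, F (((1 : ℝ) / (j.factorial : ℝ)) • (e j <• deltaSeq j)) =
        ((1 : ℝ) / (j.factorial : ℝ)) • (e j <• deltaSeq j) := by
      intro j
      rw [F.map_smul_of_tower, hFA, hF, aux_smul_assoc, deltaSeq_mul, if_pos rfl]
    simp only [heq] at hs
    exact hs.unique hv
  -- Part 2
  have h2 : ∀ k : ℕ, v <• deltaSeq k =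
      ((1 : ℝ) / (k.factorial : ℝ)) • (e k <• deltaSeq k) := by
    intro k
    have hs := hv.mapL (auxCLM (deltaSeq k))
    have heq : ∀ j : ℕ, auxCLM (E := E) (deltaSeq k)
        (((1 : ℝ) / (j.factorial : ℝ)) • (e j <• deltaSeq j)) =
        if j = k then ((1 : ℝ) / (k.factorial : ℝ)) • (e k <• deltaSeq k) else 0 := by
      intro j
      rw [auxCLM_apply, aux_rsmul, aux_smul_assoc, deltaSeq_mul]
      by_cases h : j = k
      · subst h; rw [if_pos rfl, if_pos rfl]
      · rw [if_neg h, if_neg h, aux_smul_zero, smul_zero]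
    simp only [heq] at hs
    rw [auxCLM_apply] at hs
    exact hs.unique (hasSum_ite_eq k _)
  -- the coefficients
  set bf : E → ℕ → C(OnePoint ℕ, ℂ) := fun x k =>
    (k.factorial : ℂ) • (deltaSeq k * (inner C(OnePoint ℕ, ℂ) (e k) x : C(OnePoint ℕ, ℂ))) with hbf
  have hkey : ∀ (x : E) (k : ℕ),
      v <• bf x k = F (e k <• (inner C(OnePoint ℕ, ℂ) (e k) x : C(OnePoint ℕ, ℂ))) := by
    intro x k
    have hfac : (k.factorial : ℂ) • (((1 : ℝ) / (k.factorial : ℝ)) •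
        (e k <• (deltaSeq k * (inner C(OnePoint ℕ, ℂ) (e k) x : C(OnePoint ℕ, ℂ))))) =
        e k <• (deltaSeq k * (inner C(OnePoint ℕ, ℂ) (e k) x : C(OnePoint ℕ, ℂ))) := by
      rw [← Complex.coe_smul, smul_smul]
      have : (k.factorial : ℂ) * (((1 : ℝ) / (k.factorial : ℝ) : ℝ) : ℂ) = 1 := by
        push_cast
        rw [mul_one_div, div_self]
        exact_mod_cast Nat.factorial_ne_zero k
      rw [this, one_smul]
    rw [hbf]
    rw [aux_smul_csmul, ← aux_smul_assoc, h2, aux_rsmul, aux_smul_assoc, hfac,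
      hFA, hF, aux_smul_assoc]
  have happrox : ∀ x : E, Filter.Tendsto
      (fun n => ∑ k ∈ Finset.range n, v <• bf x k) Filter.atTop (nhds (F x)) := by
    intro x
    have hs := (hrec x).mapL F
    have heq : ∀ k : ℕ, F (e k <• (inner C(OnePoint ℕ, ℂ) (e k) x : C(OnePoint ℕ, ℂ))) = v <• bf x k :=
      fun k => (hkey x k).symm
    simp only [heq] at hs
    exact hs.tendsto_sum_nat
  refine ⟨h1, h2, ?_, ?_⟩
  · rintro y ⟨x, -, rfl⟩ ε hε
    obtain ⟨N, hN⟩ := Metric.tendsto_atTop.mp (happrox x) ε hε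
    refine ⟨N, fun k => bf x k, ?_⟩
    have := hN N le_rfl
    rw [dist_eq_norm, norm_sub_rev] at this
    rwa [Fin.sum_univ_eq_sum_range (fun k => v <• bf x k) N]
  · set S : Set E := {w : E | ∃ a : C(OnePoint ℕ, ℂ), w = v <• a} with hS
    apply Set.Subset.antisymm
    · apply closure_minimal ?_ isClosed_closure
      rintro y ⟨x, rfl⟩
      refine mem_closure_of_tendsto (happrox x) (Filter.Eventually.of_forall fun n => ?_)
      exact Submodule.sum_mem _ fun k _ => Submodule.subset_span ⟨bf x k, rfl⟩
    · have hSr : S ⊆ Set.range F := by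
        rintro w ⟨a, rfl⟩
        exact ⟨v <• a, by rw [hFA, h1]⟩
      have hle : Submodule.span ℂ S ≤ LinearMap.range (F : E →ₗ[ℂ] E) := by
        rw [Submodule.span_le]
        intro w hw
        obtain ⟨x, hx⟩ := hSr hw
        exact ⟨x, hx⟩
      have : (Submodule.span ℂ S : Set E) ⊆ Set.range F := by
        intro w hw
        obtain ⟨x, hx⟩ := hle hw
        exact ⟨x, hx⟩
      exact closure_minimal (this.trans subset_closure) isClosed_closure
end
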